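/- Let α > 0 with α ≠ 1, T > 0, μ ∈ ℝ, and let N : ℝ → ℝ be continuously differentiable with N(E) = 0 for E ≤ 0 and |N(E)| + |N′(E)| ≤ C(1+|E|)^k for some constants C > 0, k ∈ ℕ. Define the pressure p(T) := ∫_{−∞}^{∞} N(E) · f_T(E−μ) dE. Then ∫_{−∞}^{∞} N′(E) · h_α(f_T(E−μ)) dE = (α/((α−1)·T)) · [ p(T) − p(T/α) ]. -/

import Mathlib

/-!
Put `x = (E - μ) / T`. Since `f_T = (1 + eˣ)⁻¹` and `1 - f_T = eˣ f_T`,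
`log (f_T ^ α + (1 - f_T) ^ α) = log (1 + e^(-αx)) - α log (1 + e^(-x))`, and `αx = (E - μ) / (T / α)`.
For every temperature `T > 0`, `E ↦ log (1 + e^(-(E - μ) / T))` has derivative `-f_T(E - μ) / T`,
so integrating by parts against `N'` gives `∫ N' log (1 + e^(-(E - μ) / T)) = p(T) / T`: there are no
boundary terms because `N` vanishes on `(-∞, 0]` and grows polynomially while `f_T` and the
logarithm decay exponentially. Applying this at `T` and `T / α` gives the formula.
-/

open MeasureTheory Real Filter Asymptotics Set Topology

noncomputable def fermi (T E : ℝ) : ℝ := (1 + exp (E / T))⁻¹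

noncomputable def renyiEntropy (α t : ℝ) : ℝ := (1 - α)⁻¹ * log (t ^ α + (1 - t) ^ α)

lemma log_one_add_exp (x : ℝ) : log (1 + exp x) = x + log (1 + exp (-x)) := by
  have h : 1 + exp x = exp x * (1 + exp (-x)) := by
    rw [mul_add, mul_one, ← exp_add, add_neg_cancel, exp_zero, add_comm]
  rw [h, log_mul (exp_ne_zero x) (by positivity), log_exp]

lemma log_inv_one_add_exp_rpow_add (α x : ℝ) :
    log ((1 + exp x)⁻¹ ^ α + (1 - (1 + exp x)⁻¹) ^ α)
      = log (1 + exp (-(α * x))) - α * log (1 + exp (-x)) := by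
  have hpos : 0 < 1 + exp x := by positivity
  have hsum : (1 + exp x)⁻¹ ^ α + (1 - (1 + exp x)⁻¹) ^ α
      = ((1 + exp x) ^ α)⁻¹ * (1 + exp (α * x)) := by
    have h1 : 1 - (1 + exp x)⁻¹ = exp x * (1 + exp x)⁻¹ := by field_simp; ring
    rw [h1, mul_rpow (exp_pos x).le (by positivity), inv_rpow hpos.le, ← exp_mul, mul_comm x α]
    ring
  rw [hsum, log_mul (by positivity) (by positivity), log_inv, log_rpow hpos,
    log_one_add_exp x, log_one_add_exp (α * x)]
  ring

lemma renyiEntropy_fermi (α T E : ℝ) :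
    renyiEntropy α (fermi T E)
      = (1 - α)⁻¹ * (log (1 + exp (-(E / (T / α)))) - α * log (1 + exp (-(E / T)))) := by
  have hdiv : E / (T / α) = α * (E / T) := by rw [div_div_eq_mul_div, mul_comm, mul_div_assoc]
  rw [renyiEntropy, fermi, log_inv_one_add_exp_rpow_add, hdiv]

lemma hasDerivAt_log_one_add_exp_neg_div_sub (T μ E : ℝ) :
    HasDerivAt (fun E => log (1 + exp (-((E - μ) / T)))) (-(fermi T (E - μ) / T)) E := by
  have h := ((((hasDerivAt_id' E).sub_const μ).div_const T).fun_neg.exp.const_add 1).log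
    (by positivity)
  convert h using 1
  rw [fermi, exp_neg]
  field_simp
  ring

lemma fermi_le_exp_neg (T E : ℝ) : fermi T E ≤ exp (-(E / T)) := by
  rw [fermi, exp_neg]
  exact inv_anti₀ (exp_pos _) (le_add_of_nonneg_left zero_le_one)

lemma log_one_add_exp_neg_le (x : ℝ) : log (1 + exp (-x)) ≤ exp (-x) := by
  linarith [log_le_sub_one_of_pos (by positivity : 0 < 1 + exp (-x))]

lemma exp_neg_div_sub_isBigO (T μ : ℝ) :
    (fun E => exp (-((E - μ) / T))) =O[atTop] fun E => exp (-T⁻¹ * E) := by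
  refine IsBigO.of_bound (exp (μ / T)) (Eventually.of_forall fun E => ?_)
  rw [norm_of_nonneg (exp_pos _).le, norm_of_nonneg (exp_pos _).le, ← exp_add]
  exact (congrArg exp (by ring)).le

lemma fermi_sub_isBigO (T μ : ℝ) :
    (fun E => fermi T (E - μ)) =O[atTop] fun E => exp (-T⁻¹ * E) := by
  refine IsBigO.trans (IsBigO.of_bound' (Eventually.of_forall fun E => ?_))
    (exp_neg_div_sub_isBigO T μ)
  rw [norm_of_nonneg (by unfold fermi; positivity), norm_of_nonneg (exp_pos _).le]
  exact fermi_le_exp_neg T (E - μ)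

lemma log_one_add_exp_neg_div_sub_isBigO (T μ : ℝ) :
    (fun E => log (1 + exp (-((E - μ) / T)))) =O[atTop] fun E => exp (-T⁻¹ * E) := by
  refine IsBigO.trans (IsBigO.of_bound' (Eventually.of_forall fun E => ?_))
    (exp_neg_div_sub_isBigO T μ)
  rw [norm_of_nonneg (log_nonneg (by linarith [exp_pos (-((E - μ) / T))])),
    norm_of_nonneg (exp_pos _).le]
  exact log_one_add_exp_neg_le _

lemma isBigO_mul_exp_neg_half_of_isBigO_pow {f g : ℝ → ℝ} {b : ℝ} {k : ℕ} (hb : 0 < b)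
    (hf : f =O[atTop] fun x => x ^ k) (hg : g =O[atTop] fun x => exp (-b * x)) :
    (fun x => f x * g x) =O[atTop] fun x => exp (-(b / 2) * x) := by
  have hf' := hf.trans (isLittleO_pow_exp_pos_mul_atTop k (half_pos hb)).isBigO
  refine (hf'.mul hg).congr_right fun x => ?_
  rw [← exp_add]
  ring_nf

lemma integrable_of_eq_zero_of_isBigO_exp_neg {φ : ℝ → ℝ} {a b : ℝ} (hb : 0 < b)
    (hφ : Continuous φ) (hφ0 : ∀ x < a, φ x = 0) (hdecay : φ =O[atTop] fun x => exp (-b * x)) :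
    Integrable φ := by
  rw [← integrableOn_univ, ← Iio_union_Ici, integrableOn_union,
    integrableOn_Ici_iff_integrableOn_Ioi]
  exact ⟨integrableOn_zero.congr_fun (fun x hx => (hφ0 x hx).symm) measurableSet_Iio,
    integrable_of_isBigO_exp_neg hb hφ.continuousOn hdecay⟩

lemma integrable_mul_of_isBigO_pow_of_isBigO_exp_neg {f g : ℝ → ℝ} {a b : ℝ} {k : ℕ}
    (hb : 0 < b) (hf : Continuous f) (hg : Continuous g) (hf0 : ∀ x < a, f x = 0)
    (hfk : f =O[atTop] fun x => x ^ k) (hgb : g =O[atTop] fun x => exp (-b * x)) :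
    Integrable fun x => f x * g x :=
  integrable_of_eq_zero_of_isBigO_exp_neg (half_pos hb) (hf.mul hg)
    (fun x hx => by rw [hf0 x hx, zero_mul]) (isBigO_mul_exp_neg_half_of_isBigO_pow hb hfk hgb)

lemma isBigO_pow_atTop_of_abs_le {f : ℝ → ℝ} {C : ℝ} {k : ℕ}
    (hf : ∀ x, |f x| ≤ C * (1 + |x|) ^ k) : f =O[atTop] fun x => x ^ k := by
  have hlin : (fun x : ℝ => 1 + |x|) =O[atTop] fun x => x :=
    (isLittleO_const_id_atTop 1).isBigO.add (isBigO_abs_left.2 (isBigO_refl _ _))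
  refine (IsBigO.of_bound C (Eventually.of_forall fun x => ?_)).trans (hlin.pow k)
  rw [norm_of_nonneg (by positivity : (0:ℝ) ≤ (1 + |x|) ^ k)]
  exact hf x

lemma deriv_eq_zero_of_forall_lt_eq_zero {N : ℝ → ℝ} {a x : ℝ} (hN0 : ∀ E < a, N E = 0)
    (hx : x < a) : deriv N x = 0 := by
  have hloc : N =ᶠ[𝓝 x] fun _ => 0 := eventually_of_mem (Iio_mem_nhds hx) hN0
  rw [hloc.deriv_eq, deriv_const]

section Pressure

variable {f N : ℝ → ℝ} {a T : ℝ} {k : ℕ}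

lemma integrable_mul_fermi_sub (μ : ℝ) (hT : 0 < T) (hf : Continuous f)
    (hf0 : ∀ E < a, f E = 0) (hfk : f =O[atTop] fun E => E ^ k) :
    Integrable fun E => f E * fermi T (E - μ) :=
  integrable_mul_of_isBigO_pow_of_isBigO_exp_neg (inv_pos.2 hT) hf
    (Continuous.inv₀ (by fun_prop) fun E => by positivity) hf0 hfk (fermi_sub_isBigO T μ)

lemma integrable_mul_log_one_add_exp_neg_div_sub (μ : ℝ) (hT : 0 < T) (hf : Continuous f)
    (hf0 : ∀ E < a, f E = 0) (hfk : f =O[atTop] fun E => E ^ k) :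
    Integrable fun E => f E * log (1 + exp (-((E - μ) / T))) :=
  integrable_mul_of_isBigO_pow_of_isBigO_exp_neg (inv_pos.2 hT) hf
    (Continuous.log (by fun_prop) fun E => by positivity) hf0 hfk
    (log_one_add_exp_neg_div_sub_isBigO T μ)

theorem integral_deriv_mul_log_one_add_exp_neg_div_sub (μ : ℝ) (hT : 0 < T)
    (hN : ContDiff ℝ 1 N) (hN0 : ∀ E < a, N E = 0) (hNk : N =O[atTop] fun E => E ^ k)
    (hN'k : deriv N =O[atTop] fun E => E ^ k) :
    ∫ E, deriv N E * log (1 + exp (-((E - μ) / T))) = T⁻¹ * ∫ E, N E * fermi T (E - μ) := by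
  have hparts := integral_mul_deriv_eq_deriv_mul_of_integrable
    (v := fun E => log (1 + exp (-((E - μ) / T))))
    (fun E _ => (hN.differentiable one_ne_zero E).hasDerivAt)
    (fun E _ => hasDerivAt_log_one_add_exp_neg_div_sub T μ E)
    (((integrable_mul_fermi_sub μ hT hN.continuous hN0 hNk).div_const T).neg.congr
      (Eventually.of_forall fun E => by simp only [Pi.neg_apply, Pi.mul_apply]; ring))
    (integrable_mul_log_one_add_exp_neg_div_sub μ hT (hN.continuous_deriv le_rfl)
      (fun E hE => deriv_eq_zero_of_forall_lt_eq_zero hN0 hE) hN'k)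
    (integrable_mul_log_one_add_exp_neg_div_sub μ hT hN.continuous hN0 hNk)
  simp only [mul_neg, integral_neg, neg_inj] at hparts
  rw [← hparts, ← integral_const_mul]
  congr 1 with E
  ring

end Pressure

theorem renyi_entropy_density_eq_pressure_difference_general (α T μ : ℝ)
    (hα : 0 < α) (hT : 0 < T) (N : ℝ → ℝ)
    (hN : ContDiff ℝ 1 N) (hN0 : ∀ E ≤ (0 : ℝ), N E = 0)
    (C : ℝ) (k : ℕ)
    (hbd : ∀ E : ℝ, |N E| + |deriv N E| ≤ C * (1 + |E|) ^ k) :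
    ∫ E : ℝ, deriv N E *
        ((1 - α)⁻¹ * Real.log
          (((1 + Real.exp ((E - μ) / T))⁻¹) ^ α + (1 - (1 + Real.exp ((E - μ) / T))⁻¹) ^ α))
      = (α / ((α - 1) * T)) *
        ((∫ E : ℝ, N E * (1 + Real.exp ((E - μ) / T))⁻¹)
          - ∫ E : ℝ, N E * (1 + Real.exp ((E - μ) / (T / α)))⁻¹) := by
  have hTα : 0 < T / α := div_pos hT hα
  have hN0' : ∀ E < 0, N E = 0 := fun E hE => hN0 E hE.le
  have hNk : N =O[atTop] fun E => E ^ k :=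
    isBigO_pow_atTop_of_abs_le fun E => (le_add_of_nonneg_right (abs_nonneg _)).trans (hbd E)
  have hN'k : deriv N =O[atTop] fun E => E ^ k :=
    isBigO_pow_atTop_of_abs_le fun E => (le_add_of_nonneg_left (abs_nonneg _)).trans (hbd E)
  have hL : ∀ T' > 0, Integrable fun E => deriv N E * log (1 + exp (-((E - μ) / T'))) :=
    fun T' hT' => integrable_mul_log_one_add_exp_neg_div_sub μ hT' (hN.continuous_deriv le_rfl)
      (fun E hE => deriv_eq_zero_of_forall_lt_eq_zero hN0' hE) hN'k
  show ∫ E, deriv N E * renyiEntropy α (fermi T (E - μ)) = α / ((α - 1) * T) *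
    ((∫ E, N E * fermi T (E - μ)) - ∫ E, N E * fermi (T / α) (E - μ))
  have hpointwise : ∀ E, deriv N E * renyiEntropy α (fermi T (E - μ)) = (1 - α)⁻¹ *
      (deriv N E * log (1 + exp (-((E - μ) / (T / α))))
        - α * (deriv N E * log (1 + exp (-((E - μ) / T))))) := fun E => by
    rw [renyiEntropy_fermi]
    ring
  simp only [hpointwise]
  rw [integral_const_mul, integral_sub (hL _ hTα) ((hL T hT).const_mul α), integral_const_mul,
    integral_deriv_mul_log_one_add_exp_neg_div_sub μ hT hN hN0' hNk hN'k,
    integral_deriv_mul_log_one_add_exp_neg_div_sub μ hTα hN hN0' hNk hN'k]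
  rw [inv_div, ← neg_sub α 1, inv_neg, ← div_div]
  ring

/-- The thermal `α`-Rényi entropy density as a difference of pressures: for `α > 0`,
`α ≠ 1`, `T > 0`, `μ ∈ ℝ` and a `C¹` integrated density of states `N` vanishing on
`(-∞,0]` and of polynomial growth (together with its derivative),
`∫ N′(E) h_α(f_T(E-μ)) dE = (α/((α-1)T)) (p(T) - p(T/α))`, where
`p(T) = ∫ N(E) f_T(E-μ) dE` and `f_T(E) = (1+exp(E/T))⁻¹`. -/
theorem renyi_entropy_density_eq_pressure_difference (α T μ : ℝ)
    (hα : 0 < α) (hα1 : α ≠ 1) (hT : 0 < T) (N : ℝ → ℝ)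
    (hN : ContDiff ℝ 1 N) (hN0 : ∀ E ≤ (0 : ℝ), N E = 0)
    (C : ℝ) (k : ℕ) (hC : 0 < C)
    (hbd : ∀ E : ℝ, |N E| + |deriv N E| ≤ C * (1 + |E|) ^ k) :
    ∫ E : ℝ, deriv N E *
        ((1 - α)⁻¹ * Real.log
          (((1 + Real.exp ((E - μ) / T))⁻¹) ^ α + (1 - (1 + Real.exp ((E - μ) / T))⁻¹) ^ α))
      = (α / ((α - 1) * T)) *
        ((∫ E : ℝ, N E * (1 + Real.exp ((E - μ) / T))⁻¹)
          - ∫ E : ℝ, N E * (1 + Real.exp ((E - μ) / (T / α)))⁻¹) :=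
  renyi_entropy_density_eq_pressure_difference_general α T μ hα hT N hN hN0 C k hbd
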